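/- For every α ∈ 𝔻 and every integer m ≥ 1, writing g := b_α^{m-1} · (M_z* b_α) ∈ H²(𝔻), one has ⟨g, M_z* g⟩ = conj(α)(1-|α|²); equivalently, the orthogonal projection of M_z* g onto the one-dimensional subspace ℂ·g equals conj(α)·g. -/

import Mathlib

open scoped ComplexConjugate

noncomputable section

namespace Rudin

/-- The open unit disc in `ℂ`. -/
def disc : Set ℂ := Metric.ball 0 1

/-- The Hardy space `H²(𝔻)`, modeled as the space of square-summable
power-series coefficient sequences. -/
abbrev H2 : Type := lp (fun _ : ℕ => ℂ) 2

/-- Evaluation of an element of `H²(𝔻)` as a holomorphic function on the disc. -/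
def H2.eval (f : H2) (z : ℂ) : ℂ := ∑' m : ℕ, (f : ℕ → ℂ) m * z ^ m

/-- `T` is the operator of multiplication by the function `φ` on `H²(𝔻)`. -/
def IsMulOp (φ : ℂ → ℂ) (T : H2 →L[ℂ] H2) : Prop :=
  ∀ f : H2, ∀ z ∈ disc, H2.eval (T f) z = φ z * H2.eval f z

/-- `φ` is an inner function: bounded holomorphic on `𝔻`, multiplication by `φ`
maps `H²(𝔻)` into itself and is an isometry. -/
structure IsInner (φ : ℂ → ℂ) : Prop where
  diff : DifferentiableOn ℂ φ disc
  bdd : ∃ C : ℝ, ∀ z ∈ disc, ‖φ z‖ ≤ C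
  mul_mem : ∀ h : H2, ∃ g : H2, ∀ z ∈ disc, H2.eval g z = φ z * H2.eval h z
  isom : ∀ h g : H2, (∀ z ∈ disc, H2.eval g z = φ z * H2.eval h z) → ‖g‖ = ‖h‖

/-- Divisibility of inner functions: `ψ = φ · θ` with `θ` inner. -/
def InnerDvd (φ ψ : ℂ → ℂ) : Prop :=
  ∃ θ : ℂ → ℂ, IsInner θ ∧ ∀ z ∈ disc, ψ z = φ z * θ z

/-- The subset `φ H²(𝔻)` of `H²(𝔻)`. -/
def shiftedSet (φ : ℂ → ℂ) : Set H2 :=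
  {g | ∃ h : H2, ∀ z ∈ disc, H2.eval g z = φ z * H2.eval h z}

/-- The quotient module `Q_φ = H²(𝔻) ⊖ φ H²(𝔻)`. -/
def Qsp (φ : ℂ → ℂ) : Submodule ℂ H2 := (Submodule.span ℂ (shiftedSet φ))ᗮ

/-- The Blaschke factor at `a ∈ 𝔻`. -/
def blaschke (a z : ℂ) : ℂ := (z - a) / (1 - conj a * z)

/-- The smallest closed subspace of `H²(𝔻)` containing `f` and invariant under `Mz*`. -/
def starHull (Mz : H2 →L[ℂ] H2) (f : H2) : Submodule ℂ H2 :=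
  sInf {K : Submodule ℂ H2 | IsClosed (K : Set H2) ∧ f ∈ K ∧
    ∀ x ∈ K, ContinuousLinearMap.adjoint Mz x ∈ K}

/-- `f` is a star-cyclic vector of the quotient module `Q`. -/
def StarCyclic (Mz : H2 →L[ℂ] H2) (Q : Submodule ℂ H2) (f : H2) : Prop :=
  f ∈ Q ∧ starHull Mz f = Q

end Rudin

/-! The Szegő kernel `k_α` (coefficients `conj α ^ n`) reproduces point evaluation and is an
eigenvector of `M_z*` with eigenvalue `conj α`; since `b_α = -α + (1 - |α|²) z k_α`, also
`h := M_z* b_α = (1 - |α|²) k_α`. Multiplication by `b_α` is the operator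
`B = (M_z - α)(1 - conj α M_z)⁻¹`, which is an isometry because `M_z` is one, and it commutes
with `M_z`. Hence `g = B^(m-1) h` satisfies `‖g‖² = ‖h‖² = 1 - |α|²` and
`⟨g, M_z* g⟩ = ⟨M_z B^(m-1) h, B^(m-1) h⟩ = ⟨M_z h, h⟩ = conj α ‖h‖²`. -/

open scoped InnerProductSpace

section BlaschkeOp

variable {A : Type*} [Ring A] [Algebra ℂ A]

def blaschkeOp (a : ℂ) (s : A) : A := (s - algebraMap ℂ A a) * Ring.inverse (1 - conj a • s)

theorem commute_blaschkeOp (a : ℂ) (s : A) : Commute s (blaschkeOp a s) := by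
  refine ((Commute.refl s).sub_right (Algebra.commutes a s).symm).mul_right ?_
  by_cases hu : IsUnit (1 - conj a • s)
  · obtain ⟨u, hu⟩ := hu
    rw [← hu, Ring.inverse_unit]
    exact Commute.units_inv_right (hu ▸ (Commute.one_right s).sub_right
      ((Commute.refl s).smul_right _))
  · rw [Ring.inverse_non_unit _ hu]
    exact Commute.zero_right s

variable [StarRing A] [StarModule ℂ A]

theorem star_blaschkeOp_mul_self {a : ℂ} {s : A} (hs : star s * s = 1)
    (hu : IsUnit (1 - conj a • s)) : star (blaschkeOp a s) * blaschkeOp a s = 1 := by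
  set u := 1 - conj a • s
  have key : star (s - algebraMap ℂ A a) * (s - algebraMap ℂ A a) = star u * u := by
    simp only [u, star_sub, star_one, star_smul, Algebra.algebraMap_eq_smul_one, sub_mul, mul_sub,
      smul_mul_assoc, mul_smul_comm, one_mul, mul_one, hs, RCLike.star_def, Complex.conj_conj]
    module
  calc star (blaschkeOp a s) * blaschkeOp a s
      = star (Ring.inverse u) * (star (s - algebraMap ℂ A a) * (s - algebraMap ℂ A a))
          * Ring.inverse u := by simp only [blaschkeOp, star_mul, mul_assoc, u]
    _ = star (u * Ring.inverse u) * (u * Ring.inverse u) := by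
          simp only [key, star_mul, mul_assoc]
    _ = 1 := by rw [Ring.mul_inverse_cancel _ hu, star_one, one_mul]

end BlaschkeOp

theorem CStarRing.norm_le_one_of_star_mul_self {E : Type*} [NormedRing E] [StarRing E]
    [CStarRing E] {x : E} (h : star x * x = 1) : ‖x‖ ≤ 1 := by
  have h1 : ‖(1 : E)‖ * ‖(1 : E)‖ = ‖(1 : E)‖ := by
    rw [← CStarRing.norm_star_mul_self, star_one, one_mul]
  have hx : ‖x‖ * ‖x‖ = ‖(1 : E)‖ := by rw [← CStarRing.norm_star_mul_self, h]
  have h1' : ‖(1 : E)‖ ≤ 1 := by nlinarith [norm_nonneg (1 : E)]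
  nlinarith [norm_nonneg x]

theorem star_pow_mul_pow_of_star_mul_self {R : Type*} [Monoid R] [StarMul R] {x : R}
    (h : star x * x = 1) (k : ℕ) : star (x ^ k) * x ^ k = 1 := by
  induction k with
  | zero => simp
  | succ k ih =>
    rw [pow_succ, star_mul, mul_assoc, ← mul_assoc (star (x ^ k)), ih, one_mul, h]

section Hilbert

variable {𝕜 E : Type*} [RCLike 𝕜] [NormedAddCommGroup E] [InnerProductSpace 𝕜 E]

theorem ContinuousLinearMap.inner_map_map_of_star_mul_self [CompleteSpace E] {T : E →L[𝕜] E}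
    (hT : star T * T = 1) (x y : E) : ⟪T x, T y⟫_𝕜 = ⟪x, y⟫_𝕜 := by
  rw [← adjoint_inner_right, ← star_eq_adjoint, ← mul_apply_eq_comp, hT, one_apply_eq_self]

theorem ContinuousLinearMap.inner_map_adjoint_map_of_commute [CompleteSpace E] {S V : E →L[𝕜] E}
    (hV : star V * V = 1) (hSV : Commute S V) (x : E) :
    ⟪V x, adjoint S (V x)⟫_𝕜 = ⟪x, adjoint S x⟫_𝕜 := by
  rw [adjoint_inner_right, adjoint_inner_right, ← mul_apply_eq_comp, hSV.eq, mul_apply_eq_comp,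
    inner_map_map_of_star_mul_self hV]

theorem Submodule.starProjection_singleton_of_inner_eq {v w : E} {a : 𝕜}
    (h : ⟪v, w⟫_𝕜 = a * ⟪v, v⟫_𝕜) : (𝕜 ∙ v).starProjection w = a • v := by
  rcases eq_or_ne v 0 with rfl | hv
  · simp
  rw [starProjection_singleton, h, inner_self_eq_norm_sq_to_K, ← RCLike.ofReal_pow,
    mul_div_cancel_right₀ _ (RCLike.ofReal_ne_zero.mpr (pow_ne_zero 2 (norm_ne_zero_iff.mpr hv)))]

end Hilbert

namespace Rudin

lemma mem_disc_iff {z : ℂ} : z ∈ disc ↔ ‖z‖ < 1 := mem_ball_zero_iff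

theorem norm_sq_lt_one {w : ℂ} (hw : w ∈ disc) : ‖w‖ ^ 2 < 1 := by
  nlinarith [mem_disc_iff.mp hw, norm_nonneg w]

theorem norm_conj_mul_lt_one {w z : ℂ} (hw : w ∈ disc) (hz : z ∈ disc) : ‖conj w * z‖ < 1 := by
  rw [norm_mul, RCLike.norm_conj]
  exact mul_lt_one_of_nonneg_of_lt_one_left (norm_nonneg w) (mem_disc_iff.mp hw)
    (mem_disc_iff.mp hz).le

theorem one_sub_conj_mul_ne_zero {w z : ℂ} (hw : w ∈ disc) (hz : z ∈ disc) :
    1 - conj w * z ≠ 0 := fun h => by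
  simpa [← sub_eq_zero.mp h] using norm_conj_mul_lt_one hw hz

namespace H2

open FormalMultilinearSeries in
theorem hasFPowerSeriesAt_eval (f : H2) :
    HasFPowerSeriesAt (H2.eval f) (ofScalars ℂ (f : ℕ → ℂ)) 0 := by
  set p : FormalMultilinearSeries ℂ ℂ ℂ := ofScalars ℂ (f : ℕ → ℂ)
  have hr : (1 : ENNReal) ≤ p.radius := by
    have := p.le_radius_of_bound (r := 1) ‖f‖ fun n => by
      simpa [p, ofScalars_norm] using lp.norm_apply_le_norm two_ne_zero f n
    rwa [ENNReal.coe_one] at this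
  have hp : HasFPowerSeriesOnBall p.sum p 0 1 :=
    (p.hasFPowerSeriesOnBall (zero_lt_one.trans_le hr)).mono zero_lt_one hr
  have heq : Set.EqOn p.sum (H2.eval f) (Metric.eball 0 1) := fun z _ => by
    simp only [FormalMultilinearSeries.sum, H2.eval, p, ofScalars_apply_eq, smul_eq_mul]
  exact (hp.congr heq).hasFPowerSeriesAt

theorem ext_eval {f g : H2} (h : ∀ z ∈ disc, H2.eval f z = H2.eval g z) : f = g :=
  lp.ext <| FormalMultilinearSeries.ofScalars_series_injective ℂ ℂ <|
    (hasFPowerSeriesAt_eval f).eq_formalMultilinearSeries_of_eventually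
      (hasFPowerSeriesAt_eval g) (Filter.eventually_of_mem (Metric.ball_mem_nhds 0 one_pos) h)

theorem memℓp_conj_pow {w : ℂ} (hw : w ∈ disc) : Memℓp (fun n : ℕ => conj w ^ n) 2 := by
  refine memℓp_gen ?_
  convert summable_geometric_of_lt_one (sq_nonneg ‖w‖) (norm_sq_lt_one hw) using 1 with n
  funext n
  rw [norm_pow, RCLike.norm_conj, ENNReal.toReal_ofNat, Real.rpow_two, ← pow_mul, pow_mul']

def szegoKernel (w : ℂ) (hw : w ∈ disc) : H2 := ⟨fun n => conj w ^ n, memℓp_conj_pow hw⟩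

theorem eval_eq_inner (f : H2) {w : ℂ} (hw : w ∈ disc) :
    H2.eval f w = ⟪szegoKernel w hw, f⟫_ℂ := by
  simp [lp.inner_eq_tsum, H2.eval, szegoKernel, mul_comm]

theorem eval_add (f g : H2) {z : ℂ} (hz : z ∈ disc) :
    H2.eval (f + g) z = H2.eval f z + H2.eval g z := by
  simp only [eval_eq_inner _ hz, inner_add_right]

theorem eval_sub (f g : H2) {z : ℂ} (hz : z ∈ disc) :
    H2.eval (f - g) z = H2.eval f z - H2.eval g z := by
  simp only [eval_eq_inner _ hz, inner_sub_right]

theorem eval_smul (c : ℂ) (f : H2) {z : ℂ} (hz : z ∈ disc) :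
    H2.eval (c • f) z = c * H2.eval f z := by
  simp only [eval_eq_inner _ hz, inner_smul_right]

theorem eval_szegoKernel {w z : ℂ} (hw : w ∈ disc) (hz : z ∈ disc) :
    H2.eval (szegoKernel w hw) z = (1 - conj w * z)⁻¹ := by
  simp [H2.eval, szegoKernel, ← mul_pow,
    tsum_geometric_of_norm_lt_one (norm_conj_mul_lt_one hw hz)]

theorem inner_szegoKernel_self {w : ℂ} (hw : w ∈ disc) :
    ⟪szegoKernel w hw, szegoKernel w hw⟫_ℂ = ((1 - ‖w‖ ^ 2 : ℝ) : ℂ)⁻¹ := by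
  rw [← eval_eq_inner, eval_szegoKernel hw hw, Complex.conj_mul']
  push_cast; rfl

def shiftCoeff (f : ℕ → ℂ) : ℕ → ℂ
  | 0 => 0
  | n + 1 => f n

theorem memℓp_shiftCoeff (f : H2) : Memℓp (shiftCoeff f) 2 := by
  refine memℓp_gen ((summable_nat_add_iff 1).mp ?_)
  simpa [shiftCoeff] using (lp.memℓp f).summable (by norm_num)

def shift (f : H2) : H2 := ⟨shiftCoeff f, memℓp_shiftCoeff f⟩

theorem eval_shift (f : H2) {z : ℂ} (hz : z ∈ disc) : H2.eval (shift f) z = z * H2.eval f z := by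
  rw [eval_eq_inner _ hz, eval_eq_inner _ hz, lp.inner_eq_tsum, lp.inner_eq_tsum,
    (lp.summable_inner (𝕜 := ℂ) _ (shift f)).tsum_eq_zero_add, ← tsum_mul_left]
  simp only [shift, shiftCoeff, szegoKernel, RCLike.inner_apply, map_pow, Complex.conj_conj,
    zero_mul, zero_add]
  exact tsum_congr fun n => by ring

theorem inner_shift_shift (f g : H2) : ⟪shift f, shift g⟫_ℂ = ⟪f, g⟫_ℂ := by
  rw [lp.inner_eq_tsum, lp.inner_eq_tsum,
    (lp.summable_inner (𝕜 := ℂ) (shift f) (shift g)).tsum_eq_zero_add]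
  simp [shift, shiftCoeff]

end H2

open ContinuousLinearMap H2

theorem IsMulOp.pow {φ : ℂ → ℂ} {T : H2 →L[ℂ] H2} (hT : IsMulOp φ T) (k : ℕ) :
    IsMulOp (fun z => φ z ^ k) (T ^ k) := by
  induction k with
  | zero => intro f z _; simp
  | succ k ih =>
    intro f z hz
    rw [pow_succ, mul_apply_eq_comp, ih _ z hz, hT f z hz]
    ring

section MulZ

variable {Mz : H2 →L[ℂ] H2} (hMz : IsMulOp (fun z => z) Mz)
include hMz

theorem IsMulOp.eq_shift (f : H2) : Mz f = shift f :=
  ext_eval fun z hz => by rw [hMz f z hz, eval_shift f hz]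

theorem IsMulOp.star_mul_self : star Mz * Mz = 1 :=
  ContinuousLinearMap.ext fun f => ext_inner_left ℂ fun x => by
    rw [mul_apply_eq_comp, star_eq_adjoint, adjoint_inner_right, hMz.eq_shift, hMz.eq_shift,
      inner_shift_shift, one_apply_eq_self]

theorem IsMulOp.adjoint_szegoKernel {w : ℂ} (hw : w ∈ disc) :
    adjoint Mz (szegoKernel w hw) = conj w • szegoKernel w hw :=
  ext_inner_right ℂ fun f => by
    rw [adjoint_inner_left, ← eval_eq_inner, hMz f w hw, inner_smul_left, Complex.conj_conj,
      ← eval_eq_inner]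

theorem IsMulOp.isUnit_one_sub_conj_smul {α : ℂ} (hα : α ∈ disc) : IsUnit (1 - conj α • Mz) := by
  have hnorm : ‖conj α • Mz‖ < 1 := calc
    ‖conj α • Mz‖ ≤ ‖α‖ * ‖Mz‖ := by simpa using norm_smul_le (conj α) Mz
    _ ≤ ‖α‖ * 1 := by
      gcongr
      exact CStarRing.norm_le_one_of_star_mul_self hMz.star_mul_self
    _ < 1 := by rw [mul_one]; exact mem_disc_iff.mp hα
  rw [← Units.val_oneSub _ hnorm]
  exact Units.isUnit _

theorem isMulOp_blaschkeOp {α : ℂ} (hα : α ∈ disc) : IsMulOp (blaschke α) (blaschkeOp α Mz) := by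
  intro f z hz
  set w := Ring.inverse (1 - conj α • Mz) f
  have hf : eval f z = (1 - conj α * z) * eval w z := by
    rw [← one_apply_eq_self (F := H2 →L[ℂ] H2) f,
      ← Ring.mul_inverse_cancel _ (hMz.isUnit_one_sub_conj_smul hα), mul_apply_eq_comp, sub_apply,
      one_apply_eq_self, smul_apply, eval_sub _ _ hz, eval_smul _ _ hz, hMz _ z hz]
    ring
  have hT : blaschkeOp α Mz f = Mz w - α • w := by
    simp [blaschkeOp, Algebra.algebraMap_eq_smul_one, w]
  rw [hT, eval_sub _ _ hz, eval_smul _ _ hz, hMz w z hz, hf, blaschke,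
    div_mul_eq_mul_div, eq_div_iff (one_sub_conj_mul_ne_zero hα hz)]
  ring

theorem IsMulOp.adjoint_eq_smul_szegoKernel {α : ℂ} (hα : α ∈ disc) {bα : H2}
    (hb : ∀ z ∈ disc, eval bα z = blaschke α z) :
    adjoint Mz bα = ((1 - ‖α‖ ^ 2 : ℝ) : ℂ) • szegoKernel α hα := by
  have h0 : (0 : ℂ) ∈ disc := Metric.mem_ball_self one_pos
  have hdecomp : bα = (-α) • szegoKernel 0 h0 + ((1 - ‖α‖ ^ 2 : ℝ) : ℂ) • Mz (szegoKernel α hα) :=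
    ext_eval fun z hz => by
      rw [hb z hz, eval_add _ _ hz, eval_smul _ _ hz, eval_smul _ _ hz, hMz _ z hz,
        eval_szegoKernel _ hz, eval_szegoKernel _ hz, blaschke]
      have hne := one_sub_conj_mul_ne_zero hα hz
      rw [map_zero, zero_mul, sub_zero, inv_one, mul_one, Complex.ofReal_sub, Complex.ofReal_one,
        Complex.ofReal_pow, ← Complex.conj_mul']
      dsimp only
      rw [div_eq_iff hne, add_mul, mul_assoc, mul_assoc, inv_mul_cancel₀ hne]
      ring
  rw [hdecomp, map_add, map_smul, map_smul, hMz.adjoint_szegoKernel, ← mul_apply_eq_comp,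
    ← star_eq_adjoint, hMz.star_mul_self]
  simp

end MulZ

end Rudin

open Rudin in
theorem stmt9_general (α : ℂ) (hα : α ∈ disc) (m : ℕ)
    (Mz : H2 →L[ℂ] H2) (hMz : IsMulOp (fun z => z) Mz)
    (bα : H2) (hb : ∀ z ∈ disc, H2.eval bα z = blaschke α z)
    (g : H2)
    (hg : ∀ z ∈ disc,
      H2.eval g z = blaschke α z ^ (m - 1) * H2.eval (ContinuousLinearMap.adjoint Mz bα) z) :
    (inner ℂ g (ContinuousLinearMap.adjoint Mz g) : ℂ) = conj α * ((1 - ‖α‖ ^ 2 : ℝ) : ℂ) ∧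
    (Submodule.orthogonalProjection (ℂ ∙ g) (ContinuousLinearMap.adjoint Mz g) : H2)
      = conj α • g := by
  set c : ℂ := ((1 - ‖α‖ ^ 2 : ℝ) : ℂ)
  set h : H2 := c • H2.szegoKernel α hα
  set V := blaschkeOp α Mz ^ (m - 1)
  have hV : star V * V = 1 := star_pow_mul_pow_of_star_mul_self
    (star_blaschkeOp_mul_self hMz.star_mul_self (hMz.isUnit_one_sub_conj_smul hα)) _
  have hgV : g = V h := H2.ext_eval fun z hz => by
    rw [hg z hz, (isMulOp_blaschkeOp hMz hα).pow (m - 1) h z hz,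
      hMz.adjoint_eq_smul_szegoKernel hα hb]
  have hc : c ≠ 0 := Complex.ofReal_ne_zero.mpr (sub_ne_zero.mpr (norm_sq_lt_one hα).ne')
  have hh : ⟪h, h⟫_ℂ = c := by
    rw [inner_smul_left, inner_smul_right, H2.inner_szegoKernel_self, Complex.conj_ofReal,
      mul_inv_cancel₀ hc, mul_one]
  have hMh : ⟪h, ContinuousLinearMap.adjoint Mz h⟫_ℂ = conj α * c := by
    rw [map_smul, hMz.adjoint_szegoKernel, smul_comm, inner_smul_right, hh]
  have key : ⟪g, ContinuousLinearMap.adjoint Mz g⟫_ℂ = conj α * c := by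
    rw [hgV, ContinuousLinearMap.inner_map_adjoint_map_of_commute hV
      ((commute_blaschkeOp α Mz).pow_right _), hMh]
  refine ⟨key, ?_⟩
  rw [← Submodule.starProjection_apply]
  refine Submodule.starProjection_singleton_of_inner_eq ?_
  rw [key, hgV, ContinuousLinearMap.inner_map_map_of_star_mul_self hV, hh]

open Rudin in
/-- For `α ∈ 𝔻` and `m ≥ 1`, with `g = b_α^{m-1} · (M_z* b_α)`, one has
`⟨g, M_z* g⟩ = conj α · (1-|α|²)`; equivalently, the orthogonal projection of `M_z* g`
onto the one-dimensional subspace `ℂ·g` equals `conj α • g`. -/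
theorem stmt9 (α : ℂ) (hα : α ∈ disc) (m : ℕ) (hm : 1 ≤ m)
    (Mz : H2 →L[ℂ] H2) (hMz : IsMulOp (fun z => z) Mz)
    (bα : H2) (hb : ∀ z ∈ disc, H2.eval bα z = blaschke α z)
    (g : H2)
    (hg : ∀ z ∈ disc,
      H2.eval g z = blaschke α z ^ (m - 1) * H2.eval (ContinuousLinearMap.adjoint Mz bα) z) :
    (inner ℂ g (ContinuousLinearMap.adjoint Mz g) : ℂ) = conj α * ((1 - ‖α‖ ^ 2 : ℝ) : ℂ) ∧
    (Submodule.orthogonalProjection (ℂ ∙ g) (ContinuousLinearMap.adjoint Mz g) : H2)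
      = conj α • g :=
  stmt9_general α hα m Mz hMz bα hb g hg
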